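/- arXiv:2408.00304 — 3 statements merged into one kernel-verified Lean document; each statement's English description precedes it below -/
import Mathlib

section
/- Let V be a real inner product space with inner product ⟪·,·⟫ and norm ‖·‖, and let 𝒜 : V × V → ℝ be a bilinear form with 𝒜(v, v) ≥ 0 for all v ∈ V; write N(v) := √(𝒜(v, v)). Assume the continuity bound |𝒜(x, y)| ≤ C̄ · N(x) · N(y) for all x, y ∈ V with a constant C̄ > 0, and let H > 0, c_# > 0. Suppose e, z, z̃ ∈ V satisfy: (i) ‖e‖² = 𝒜(z, e); (ii) 𝒜(z̃, e) = 0; (iii) 𝒜(z̃, z − z̃) = 0; (iv) 𝒜(z, z − z̃) = ⟪e, z − z̃⟫; (v) ‖z − z̃‖ ≤ H · c_# · N(z − z̃). Then ‖e‖ ≤ C̄ · H · c_# · N(e). -/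
/-!
With `d = z - zt`, the orthogonality relations turn `‖e‖²` into `A d e ≤ C √(A d d) √(A e e)`,
and `A d d` into `⟪e, d⟫ ≤ ‖e‖ ‖d‖ ≤ H c ‖e‖ √(A d d)`, so `√(A d d) ≤ H c ‖e‖`.
Substituting the second bound into the first and cancelling one factor `‖e‖` gives the estimate.
-/

open scoped RealInnerProductSpace

theorem le_of_sq_le_mul_self {a b : ℝ} (hb : 0 ≤ b) (h : a ^ 2 ≤ b * a) : a ≤ b := by
  by_contra! hab
  nlinarith

theorem sqrt_apply_sub_le_of_galerkin {V : Type*} [NormedAddCommGroup V] [InnerProductSpace ℝ V]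
    (A : V →ₗ[ℝ] V →ₗ[ℝ] ℝ) (hA : ∀ v : V, 0 ≤ A v v) {H c : ℝ} (hHc : 0 ≤ H * c)
    {e z zt : V} (h3 : A zt (z - zt) = 0) (h4 : A z (z - zt) = ⟪e, z - zt⟫)
    (h5 : ‖z - zt‖ ≤ H * c * Real.sqrt (A (z - zt) (z - zt))) :
    Real.sqrt (A (z - zt) (z - zt)) ≤ H * c * ‖e‖ := by
  apply le_of_sq_le_mul_self (by positivity)
  calc Real.sqrt (A (z - zt) (z - zt)) ^ 2 = A (z - zt) (z - zt) := Real.sq_sqrt (hA _)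
    _ = ⟪e, z - zt⟫ := by rw [LinearMap.map_sub₂, h3, h4, sub_zero]
    _ ≤ ‖e‖ * ‖z - zt‖ := real_inner_le_norm _ _
    _ ≤ ‖e‖ * (H * c * Real.sqrt (A (z - zt) (z - zt))) := by gcongr
    _ = H * c * ‖e‖ * Real.sqrt (A (z - zt) (z - zt)) := by ring

/-- Abstract Aubin–Nitsche duality argument (Lemma 4.2): under the listed identities for
the error `e`, the dual solution `z` and its Galerkin approximation `zt`, one has
`‖e‖ ≤ C̄ · H · c_# · ‖e‖_𝒜`. -/
theorem aubin_nitsche_duality {V : Type*} [NormedAddCommGroup V] [InnerProductSpace ℝ V]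
    (A : V →ₗ[ℝ] V →ₗ[ℝ] ℝ) (hA : ∀ v : V, 0 ≤ A v v)
    (C H c : ℝ) (hC : 0 < C) (hH : 0 < H) (hc : 0 < c)
    (hcont : ∀ x y : V, |A x y| ≤ C * Real.sqrt (A x x) * Real.sqrt (A y y))
    (e z zt : V)
    (h1 : ‖e‖ ^ 2 = A z e)
    (h2 : A zt e = 0)
    (h3 : A zt (z - zt) = 0)
    (h4 : A z (z - zt) = ⟪e, z - zt⟫)
    (h5 : ‖z - zt‖ ≤ H * c * Real.sqrt (A (z - zt) (z - zt))) :
    ‖e‖ ≤ C * H * c * Real.sqrt (A e e) := by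
  have hdual := sqrt_apply_sub_le_of_galerkin A hA (by positivity) h3 h4 h5
  apply le_of_sq_le_mul_self (by positivity)
  calc ‖e‖ ^ 2 = A (z - zt) e := by rw [h1, map_sub, LinearMap.sub_apply, h2, sub_zero]
    _ ≤ |A (z - zt) e| := le_abs_self _
    _ ≤ C * Real.sqrt (A (z - zt) (z - zt)) * Real.sqrt (A e e) := hcont _ _
    _ ≤ C * (H * c * ‖e‖) * Real.sqrt (A e e) := by gcongr
    _ = C * H * c * Real.sqrt (A e e) * ‖e‖ := by ring
end

section
/- Let H be a real Hilbert space with inner product ⟪·,·⟫ and norm ‖·‖, let 𝒜 : H × H → ℝ be a continuous bilinear form with 𝒜(w, w) ≥ 0 for all w ∈ H, and let |·|_B be a continuous seminorm on H such that |𝒜(x, y)| ≤ C̄ · √(𝒜(x,x)) · |y|_B for all x, y ∈ H, with constant C̄ ≥ 1. Let W ⊆ H be a linear subspace, T > 0, and let u, u_ms, v : [0,T] → H be continuously differentiable curves such that for every t ∈ [0,T]: (i) ⟪(u − u_ms)'(t), w⟫ + 𝒜((u − u_ms)(t), w) = 0 for all w ∈ W (Galerkin orthogonality), and (ii) (u_ms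 − v)(t) ∈ W. Write e := u − u_ms. Then ‖e(T)‖² + ∫₀ᵀ 𝒜(e(t), e(t)) dt ≤ 4‖e(0)‖² + 4‖(u − v)(0)‖² + 4C̄² ( ‖(u − v)(T)‖² + ∫₀ᵀ |(u − v)(t)|_B² dt ) + 4 ( ∫₀ᵀ ‖(u − v)'(t)‖² dt )^{1/2} ( ∫₀ᵀ ‖e(t)‖² dt )^{1/2}. -/
/-!
With `e = u - u_ms` and `η = u - v`, testing the Galerkin identity with `w = η - e ∈ W` gives
`d/dt (‖e‖²/2 - ⟪e, η⟫) + 𝒜(e, e) = 𝒜(e, η) - ⟪e, η'⟫`, i.e. the time derivative has been moved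
from `e` onto `η`. Integrating over `[0, T]`, the source term is bounded by
`𝒜(e, η) ≤ 𝒜(e, e)/2 + C̄²/2 |η|_B²` (half of the dissipation is absorbed on the left), the
inner product by Cauchy–Schwarz in `L²(0, T; H)`, and the boundary terms by Young's inequality.
-/

open MeasureTheory Set
open scoped RealInnerProductSpace

theorem ContinuousOn.memLp_two_restrict_Ioc {E : Type*} [NormedAddCommGroup E] {f : ℝ → E}
    {a b : ℝ} (hf : ContinuousOn f (Icc a b)) :
    MemLp f 2 (volume.restrict (Ioc a b)) := by
  have hmeas := (hf.mono Ioc_subset_Icc_self).aestronglyMeasurable (μ := volume) measurableSet_Ioc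
  exact (memLp_two_iff_integrable_sq_norm hmeas).2
    ((hf.norm.pow 2).integrableOn_Icc.mono_set Ioc_subset_Icc_self)

theorem intervalIntegral.integral_norm_mul_norm_le {E : Type*} [NormedAddCommGroup E]
    {f g : ℝ → E} {a b : ℝ} (hab : a ≤ b)
    (hf : ContinuousOn f (Icc a b)) (hg : ContinuousOn g (Icc a b)) :
    ∫ t in a..b, ‖f t‖ * ‖g t‖ ≤
      √(∫ t in a..b, ‖f t‖ ^ 2) * √(∫ t in a..b, ‖g t‖ ^ 2) := by
  have := integral_mul_norm_le_Lp_mul_Lq Real.HolderConjugate.two_two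
    (by simpa using hf.memLp_two_restrict_Ioc) (by simpa using hg.memLp_two_restrict_Ioc)
  simpa only [intervalIntegral.integral_of_le hab, Real.sqrt_eq_rpow, Real.rpow_two] using this

section BilinearForm

variable {H : Type*} [NormedAddCommGroup H] [InnerProductSpace ℝ H]
  (A : H →L[ℝ] H →L[ℝ] ℝ) {e η e' η' : ℝ → H} {a b : ℝ}

theorem apply_le_half_apply_self_add {p : Seminorm ℝ H} {C : ℝ} (hA : ∀ w, 0 ≤ A w w)
    (hcont : ∀ x y : H, |A x y| ≤ C * √(A x x) * p y) (x y : H) :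
    A x y ≤ A x x / 2 + C ^ 2 / 2 * p y ^ 2 := by
  have hsq : √(A x x) ^ 2 = A x x := Real.sq_sqrt (hA x)
  nlinarith [le_abs_self (A x y), hcont x y, sq_nonneg (√(A x x) - C * p y)]

theorem galerkin_energy_identity (hab : a ≤ b)
    (he : ∀ t ∈ Icc a b, HasDerivAt e (e' t) t) (hη : ∀ t ∈ Icc a b, HasDerivAt η (η' t) t)
    (hη' : ContinuousOn η' (Icc a b))
    (hgal : ∀ t ∈ Icc a b, ⟪e' t, η t - e t⟫ + A (e t) (η t - e t) = 0) :
    (‖e b‖ ^ 2 / 2 - ⟪e b, η b⟫) - (‖e a‖ ^ 2 / 2 - ⟪e a, η a⟫) + ∫ t in a..b, A (e t) (e t) =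
      ∫ t in a..b, (A (e t) (η t) - ⟪e t, η' t⟫) := by
  have hec : ContinuousOn e (Icc a b) := fun t ht => (he t ht).continuousAt.continuousWithinAt
  have hηc : ContinuousOn η (Icc a b) := fun t ht => (hη t ht).continuousAt.continuousWithinAt
  have hAe := A.continuous.comp_continuousOn hec
  have hdiss : IntervalIntegrable (fun t => A (e t) (e t)) volume a b :=
    (hAe.clm_apply hec).intervalIntegrable_of_Icc hab
  have hsource : IntervalIntegrable (fun t => A (e t) (η t) - ⟪e t, η' t⟫) volume a b :=
    ((hAe.clm_apply hηc).sub (hec.inner hη')).intervalIntegrable_of_Icc hab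
  have hderiv : ∀ t ∈ uIcc a b, HasDerivAt (fun t => ‖e t‖ ^ 2 / 2 - ⟪e t, η t⟫)
      (A (e t) (η t) - ⟪e t, η' t⟫ - A (e t) (e t)) t := by
    intro t ht
    rw [uIcc_of_le hab] at ht
    refine (((he t ht).norm_sq.div_const 2).sub ((he t ht).inner ℝ (hη t ht))).congr_deriv ?_
    have hgal_t := hgal t ht
    rw [inner_sub_right, map_sub, real_inner_comm (e t)] at hgal_t
    linarith
  rw [← intervalIntegral.integral_eq_sub_of_hasDerivAt hderiv (hsource.sub hdiss),
    intervalIntegral.integral_sub hsource hdiss]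
  ring

theorem integral_apply_sub_inner_le {p : Seminorm ℝ H} (hp : Continuous fun x => p x) {C : ℝ}
    (hA : ∀ w, 0 ≤ A w w) (hcont : ∀ x y : H, |A x y| ≤ C * √(A x x) * p y) (hab : a ≤ b)
    (hec : ContinuousOn e (Icc a b)) (hηc : ContinuousOn η (Icc a b))
    (hη' : ContinuousOn η' (Icc a b)) :
    ∫ t in a..b, (A (e t) (η t) - ⟪e t, η' t⟫) ≤
      (∫ t in a..b, A (e t) (e t)) / 2 + C ^ 2 / 2 * (∫ t in a..b, p (η t) ^ 2) +
        √(∫ t in a..b, ‖η' t‖ ^ 2) * √(∫ t in a..b, ‖e t‖ ^ 2) := by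
  have hAe := A.continuous.comp_continuousOn hec
  have hdiss : IntervalIntegrable (fun t => A (e t) (e t)) volume a b :=
    (hAe.clm_apply hec).intervalIntegrable_of_Icc hab
  have hseminorm : IntervalIntegrable (fun t => p (η t) ^ 2) volume a b :=
    ((hp.comp_continuousOn hηc).pow 2).intervalIntegrable_of_Icc hab
  have hcross : IntervalIntegrable (fun t => ‖η' t‖ * ‖e t‖) volume a b :=
    (hη'.norm.mul hec.norm).intervalIntegrable_of_Icc hab
  have hpointwise : ∀ t ∈ Icc a b, A (e t) (η t) - ⟪e t, η' t⟫ ≤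
      A (e t) (e t) / 2 + C ^ 2 / 2 * p (η t) ^ 2 + ‖η' t‖ * ‖e t‖ := fun t _ => by
    have := apply_le_half_apply_self_add A hA hcont (e t) (η t)
    linarith [neg_le_abs ⟪e t, η' t⟫, abs_real_inner_le_norm (e t) (η' t)]
  calc ∫ t in a..b, (A (e t) (η t) - ⟪e t, η' t⟫)
      ≤ ∫ t in a..b, (A (e t) (e t) / 2 + C ^ 2 / 2 * p (η t) ^ 2 + ‖η' t‖ * ‖e t‖) :=
        intervalIntegral.integral_mono_on hab
          (((hAe.clm_apply hηc).sub (hec.inner hη')).intervalIntegrable_of_Icc hab)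
          (((hdiss.div_const 2).add (hseminorm.const_mul _)).add hcross) hpointwise
    _ = (∫ t in a..b, A (e t) (e t)) / 2 + C ^ 2 / 2 * (∫ t in a..b, p (η t) ^ 2) +
          ∫ t in a..b, ‖η' t‖ * ‖e t‖ := by
        rw [intervalIntegral.integral_add ((hdiss.div_const 2).add (hseminorm.const_mul _)) hcross,
          intervalIntegral.integral_add (hdiss.div_const 2) (hseminorm.const_mul _),
          intervalIntegral.integral_div, intervalIntegral.integral_const_mul]
    _ ≤ _ := by gcongr; exact intervalIntegral.integral_norm_mul_norm_le hab hη' hec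

theorem norm_sq_add_integral_apply_self_le {p : Seminorm ℝ H} (hp : Continuous fun x => p x)
    {C : ℝ} (hC : 1 ≤ C) (hA : ∀ w, 0 ≤ A w w) (hcont : ∀ x y : H, |A x y| ≤ C * √(A x x) * p y)
    (hab : a ≤ b)
    (he : ∀ t ∈ Icc a b, HasDerivAt e (e' t) t) (hη : ∀ t ∈ Icc a b, HasDerivAt η (η' t) t)
    (hη' : ContinuousOn η' (Icc a b))
    (hgal : ∀ t ∈ Icc a b, ⟪e' t, η t - e t⟫ + A (e t) (η t - e t) = 0) :
    ‖e b‖ ^ 2 + ∫ t in a..b, A (e t) (e t) ≤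
      4 * ‖e a‖ ^ 2 + 4 * ‖η a‖ ^ 2 +
        4 * C ^ 2 * (‖η b‖ ^ 2 + ∫ t in a..b, p (η t) ^ 2) +
        4 * √(∫ t in a..b, ‖η' t‖ ^ 2) * √(∫ t in a..b, ‖e t‖ ^ 2) := by
  have hec : ContinuousOn e (Icc a b) := fun t ht => (he t ht).continuousAt.continuousWithinAt
  have hηc : ContinuousOn η (Icc a b) := fun t ht => (hη t ht).continuousAt.continuousWithinAt
  have hidentity := galerkin_energy_identity A hab he hη hη' hgal
  have hsource := integral_apply_sub_inner_le A hp hA hcont hab hec hηc hη'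
  have hdiss_nonneg : 0 ≤ ∫ t in a..b, A (e t) (e t) :=
    intervalIntegral.integral_nonneg hab fun t _ => hA _
  have hseminorm_nonneg : 0 ≤ ∫ t in a..b, p (η t) ^ 2 :=
    intervalIntegral.integral_nonneg hab fun t _ => sq_nonneg _
  -- Young's inequality at the endpoints, weighted to keep `‖e b‖² / 4` on the left
  have hyoung_b : ⟪e b, η b⟫ ≤ ‖e b‖ ^ 2 / 4 + ‖η b‖ ^ 2 := by
    nlinarith [real_inner_le_norm (e b) (η b), sq_nonneg (‖e b‖ - 2 * ‖η b‖)]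
  have hyoung_a : -⟪e a, η a⟫ ≤ ‖e a‖ ^ 2 / 2 + ‖η a‖ ^ 2 / 2 := by
    nlinarith [neg_le_abs ⟪e a, η a⟫, abs_real_inner_le_norm (e a) (η a),
      sq_nonneg (‖e a‖ - ‖η a‖)]
  have hC_sq : 1 ≤ C ^ 2 := one_le_pow₀ hC
  linarith [mul_le_mul_of_nonneg_right hC_sq (sq_nonneg ‖η b‖), sq_nonneg ‖η a‖,
    mul_nonneg (sq_nonneg C) hseminorm_nonneg]

end BilinearForm

theorem parabolic_quasi_optimality_general {H : Type*} [NormedAddCommGroup H]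
    [InnerProductSpace ℝ H]
    (A : H →L[ℝ] H →L[ℝ] ℝ) (hA : ∀ w : H, 0 ≤ A w w)
    (p : Seminorm ℝ H) (hp : Continuous fun x => p x)
    (C : ℝ) (hC : 1 ≤ C)
    (hcont : ∀ x y : H, |A x y| ≤ C * Real.sqrt (A x x) * p y)
    (W : Submodule ℝ H) (T : ℝ) (hT : 0 < T)
    (u ums v u' ums' v' : ℝ → H)
    (hu : ∀ t ∈ Set.Icc (0 : ℝ) T, HasDerivAt u (u' t) t)
    (hums : ∀ t ∈ Set.Icc (0 : ℝ) T, HasDerivAt ums (ums' t) t)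
    (hv : ∀ t ∈ Set.Icc (0 : ℝ) T, HasDerivAt v (v' t) t)
    (hu' : ContinuousOn u' (Set.Icc (0 : ℝ) T))
    (hv' : ContinuousOn v' (Set.Icc (0 : ℝ) T))
    (hgal : ∀ t ∈ Set.Icc (0 : ℝ) T, ∀ w ∈ W,
      ⟪u' t - ums' t, w⟫ + A (u t - ums t) w = 0)
    (hW : ∀ t ∈ Set.Icc (0 : ℝ) T, ums t - v t ∈ W) :
    ‖u T - ums T‖ ^ 2 + ∫ t in (0 : ℝ)..T, A (u t - ums t) (u t - ums t) ≤
      4 * ‖u 0 - ums 0‖ ^ 2 + 4 * ‖u 0 - v 0‖ ^ 2 +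
        4 * C ^ 2 * (‖u T - v T‖ ^ 2 + ∫ t in (0 : ℝ)..T, (p (u t - v t)) ^ 2) +
        4 * Real.sqrt (∫ t in (0 : ℝ)..T, ‖u' t - v' t‖ ^ 2) *
          Real.sqrt (∫ t in (0 : ℝ)..T, ‖u t - ums t‖ ^ 2) := by
  refine norm_sq_add_integral_apply_self_le A hp hC hA hcont hT.le
    (fun t ht => (hu t ht).sub (hums t ht)) (fun t ht => (hu t ht).sub (hv t ht))
    (hu'.sub hv') fun t ht => ?_
  simp only [Pi.sub_apply, sub_sub_sub_cancel_left]
  exact hgal t ht _ (hW t ht)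

/-- Parabolic quasi-optimality inequality (equation (4.5) of the paper): the error
`e = u − u_ms` of a Galerkin approximation is controlled by the error against any
comparison curve `v` with `u_ms − v` in the multiscale subspace `W`. -/
theorem parabolic_quasi_optimality {H : Type*} [NormedAddCommGroup H]
    [InnerProductSpace ℝ H] [CompleteSpace H]
    (A : H →L[ℝ] H →L[ℝ] ℝ) (hA : ∀ w : H, 0 ≤ A w w)
    (p : Seminorm ℝ H) (hp : Continuous fun x => p x)
    (C : ℝ) (hC : 1 ≤ C)
    (hcont : ∀ x y : H, |A x y| ≤ C * Real.sqrt (A x x) * p y)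
    (W : Submodule ℝ H) (T : ℝ) (hT : 0 < T)
    (u ums v u' ums' v' : ℝ → H)
    (hu : ∀ t ∈ Set.Icc (0 : ℝ) T, HasDerivAt u (u' t) t)
    (hums : ∀ t ∈ Set.Icc (0 : ℝ) T, HasDerivAt ums (ums' t) t)
    (hv : ∀ t ∈ Set.Icc (0 : ℝ) T, HasDerivAt v (v' t) t)
    (hu' : ContinuousOn u' (Set.Icc (0 : ℝ) T))
    (hums' : ContinuousOn ums' (Set.Icc (0 : ℝ) T))
    (hv' : ContinuousOn v' (Set.Icc (0 : ℝ) T))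
    (hgal : ∀ t ∈ Set.Icc (0 : ℝ) T, ∀ w ∈ W,
      ⟪u' t - ums' t, w⟫ + A (u t - ums t) w = 0)
    (hW : ∀ t ∈ Set.Icc (0 : ℝ) T, ums t - v t ∈ W) :
    ‖u T - ums T‖ ^ 2 + ∫ t in (0 : ℝ)..T, A (u t - ums t) (u t - ums t) ≤
      4 * ‖u 0 - ums 0‖ ^ 2 + 4 * ‖u 0 - v 0‖ ^ 2 +
        4 * C ^ 2 * (‖u T - v T‖ ^ 2 + ∫ t in (0 : ℝ)..T, (p (u t - v t)) ^ 2) +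
        4 * Real.sqrt (∫ t in (0 : ℝ)..T, ‖u' t - v' t‖ ^ 2) *
          Real.sqrt (∫ t in (0 : ℝ)..T, ‖u t - ums t‖ ^ 2) :=
  parabolic_quasi_optimality_general A hA p hp C hC hcont W T hT u ums v u' ums' v' hu hums hv hu'
    hv' hgal hW
end

section
/- Let H be a real Hilbert space with inner product ⟪·,·⟫ and norm ‖·‖, let T > 0, let Q : H → ℝ satisfy Q(v) ≥ 0 for all v ∈ H, and let ϑ, ρ : [0,T] → H be continuously differentiable curves such that for all t ∈ [0,T]: ⟪ρ'(t), ρ(t)⟫ + Q(ρ(t)) = −⟪ϑ'(t), ρ(t)⟫. Then ∫₀ᵀ ‖ϑ(t) + ρ(t)‖² dt ≤ 2 ∫₀ᵀ ‖ϑ(t)‖² dt + 4T ‖ρ(0)‖² + 2T² ∫₀ᵀ ‖ϑ'(t)‖² dt. -/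
open MeasureTheory Set intervalIntegral
open scoped RealInnerProductSpace

/-!
Since `Q ≥ 0`, the identity gives `⟪ρ', ρ⟫ ≤ ‖ϑ'‖ ‖ρ‖`, so `‖ρ‖` grows at rate at most `‖ϑ'‖`
and `‖ρ t‖ ≤ ‖ρ 0‖ + ∫₀ᵗ ‖ϑ'‖`. Squaring, with `(x + y)² ≤ 2x² + 2y²` twice, and integrating
reduces the claim to the Hardy-type inequality `∫₀ᵀ (∫₀ᵗ f)² ≤ (T²/2) ∫₀ᵀ f²`, which is
Cauchy–Schwarz `(∫₀ᵗ f)² ≤ t ∫₀ᵗ f²` integrated in `t`.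
-/

theorem sq_integral_le_mul_integral_sq {f : ℝ → ℝ} {a b : ℝ} (hab : a ≤ b)
    (hf : IntervalIntegrable f volume a b)
    (hf2 : IntervalIntegrable (fun t => f t ^ 2) volume a b) :
    (∫ t in a..b, f t) ^ 2 ≤ (b - a) * ∫ t in a..b, f t ^ 2 := by
  obtain rfl | hlt := hab.eq_or_lt
  · simp
  set I := ∫ t in a..b, f t
  set J := ∫ t in a..b, f t ^ 2
  have hexp : ∫ t in a..b, ((b - a) * f t - I) ^ 2 = (b - a) * ((b - a) * J - I ^ 2) := by
    rw [show (fun t => ((b - a) * f t - I) ^ 2)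
        = fun t => (b - a) ^ 2 * f t ^ 2 - 2 * (b - a) * I * f t + I ^ 2 from
        funext fun t => by ring,
      integral_add ((hf2.const_mul _).sub (hf.const_mul _))
        intervalIntegrable_const, integral_sub (hf2.const_mul _) (hf.const_mul _),
      intervalIntegral.integral_const_mul, intervalIntegral.integral_const_mul,
      intervalIntegral.integral_const, smul_eq_mul]
    ring
  have hnonneg : 0 ≤ (b - a) * ((b - a) * J - I ^ 2) :=
    hexp ▸ integral_nonneg hab fun _ _ => sq_nonneg _
  nlinarith [(mul_nonneg_iff_of_pos_left (sub_pos.2 hlt)).1 hnonneg]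

theorem integral_sq_primitive_le {f : ℝ → ℝ} {a b : ℝ} (hab : a ≤ b)
    (hf : IntervalIntegrable f volume a b)
    (hf2 : IntervalIntegrable (fun t => f t ^ 2) volume a b) :
    ∫ t in a..b, (∫ s in a..t, f s) ^ 2 ≤ (b - a) ^ 2 / 2 * ∫ t in a..b, f t ^ 2 := by
  set J := ∫ t in a..b, f t ^ 2
  have hpointwise : ∀ t ∈ Icc a b, (∫ s in a..t, f s) ^ 2 ≤ (t - a) * J := by
    intro t ht
    have hsub : uIcc a t ⊆ uIcc a b := uIcc_subset_uIcc_left (Icc_subset_uIcc ht)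
    calc (∫ s in a..t, f s) ^ 2 ≤ (t - a) * ∫ s in a..t, f s ^ 2 :=
          sq_integral_le_mul_integral_sq ht.1 (hf.mono_set hsub) (hf2.mono_set hsub)
      _ ≤ (t - a) * J := by
          gcongr
          · exact sub_nonneg.2 ht.1
          · exact integral_mono_interval le_rfl ht.1 ht.2
              (ae_of_all _ fun _ => sq_nonneg _) hf2
  calc ∫ t in a..b, (∫ s in a..t, f s) ^ 2 ≤ ∫ t in a..b, (t - a) * J :=
        integral_mono_on hab
          ((continuousOn_primitive_interval' hf left_mem_uIcc).pow 2).intervalIntegrable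
          ((by fun_prop : Continuous fun t => (t - a) * J).intervalIntegrable _ _) hpointwise
    _ = (b - a) ^ 2 / 2 * J := by
        rw [intervalIntegral.integral_mul_const,
          integral_sub intervalIntegrable_id intervalIntegrable_const, integral_id,
          intervalIntegral.integral_const, smul_eq_mul]
        ring

theorem norm_le_norm_add_integral_of_inner_deriv_le {E : Type*} [NormedAddCommGroup E]
    [InnerProductSpace ℝ E] {ρ ρ' : ℝ → E} {g : ℝ → ℝ} {a b : ℝ}
    (hρ : ContinuousOn ρ (Icc a b)) (hρ' : ∀ t ∈ Ioo a b, HasDerivAt ρ (ρ' t) t)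
    (hg : IntervalIntegrable g volume a b) (hg0 : ∀ t ∈ Ioo a b, 0 ≤ g t)
    (hinner : ∀ t ∈ Ioo a b, ⟪ρ' t, ρ t⟫ ≤ g t * ‖ρ t‖) :
    ∀ t ∈ Icc a b, ‖ρ t‖ ≤ ‖ρ a‖ + ∫ s in a..t, g s := by
  intro t ht
  have hsub : Ioo a t ⊆ Ioo a b := Ioo_subset_Ioo_right ht.2
  refine le_of_forall_pos_le_add fun ε hε => ?_
  -- `‖ρ‖` need not be differentiable where `ρ` vanishes, so regularize it
  set ψ : ℝ → ℝ := fun s => √(‖ρ s‖ ^ 2 + ε ^ 2)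
  have hpos : ∀ s, 0 < ‖ρ s‖ ^ 2 + ε ^ 2 := fun s => by positivity
  have hle_ψ : ∀ s, ‖ρ s‖ ≤ ψ s := fun s => Real.le_sqrt_of_sq_le (by nlinarith)
  have hψ' : ∀ s ∈ Ioo a b, HasDerivAt ψ (⟪ρ' s, ρ s⟫ / ψ s) s := by
    intro s hs
    convert ((hρ' s hs).norm_sq.add_const (ε ^ 2)).sqrt (hpos s).ne' using 1
    rw [real_inner_comm, mul_div_mul_left _ _ two_ne_zero]
  have hψ'_le : ∀ s ∈ Ioo a b, ⟪ρ' s, ρ s⟫ / ψ s ≤ g s := by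
    intro s hs
    rw [div_le_iff₀ (Real.sqrt_pos.2 (hpos s))]
    exact (hinner s hs).trans (mul_le_mul_of_nonneg_left (hle_ψ s) (hg0 s hs))
  have hψ_cont : ContinuousOn ψ (Icc a t) := by
    have hρ_t : ContinuousOn ρ (Icc a t) := hρ.mono (Icc_subset_Icc_right ht.2)
    fun_prop
  have hincr : ψ t - ψ a ≤ ∫ s in a..t, g s :=
    sub_le_integral_of_hasDeriv_right_of_le ht.1 hψ_cont
      (fun s hs => (hψ' s (hsub hs)).hasDerivWithinAt)
      ((intervalIntegrable_iff_integrableOn_Icc_of_le ht.1).1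
        (hg.mono_set (uIcc_subset_uIcc_left (Icc_subset_uIcc ht))))
      fun s hs => hψ'_le s (hsub hs)
  have hψa : ψ a ≤ ‖ρ a‖ + ε :=
    Real.sqrt_le_iff.2 ⟨by positivity, by nlinarith [norm_nonneg (ρ a)]⟩
  linarith [hle_ψ t]

theorem integral_norm_add_sq_le_of_norm_le_add_primitive {E : Type*} [NormedAddCommGroup E]
    {u v : ℝ → E} {g : ℝ → ℝ} {a b c : ℝ} (hab : a ≤ b)
    (hu : ContinuousOn u (uIcc a b)) (hv : ContinuousOn v (uIcc a b))
    (hg : IntervalIntegrable g volume a b)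
    (hg2 : IntervalIntegrable (fun t => g t ^ 2) volume a b)
    (hv_le : ∀ t ∈ Icc a b, ‖v t‖ ≤ c + ∫ s in a..t, g s) :
    ∫ t in a..b, ‖u t + v t‖ ^ 2 ≤
      2 * (∫ t in a..b, ‖u t‖ ^ 2) + 4 * (b - a) * c ^ 2 +
        2 * (b - a) ^ 2 * ∫ t in a..b, g t ^ 2 := by
  set G : ℝ → ℝ := fun t => ∫ s in a..t, g s
  have hpointwise : ∀ t ∈ Icc a b,
      ‖u t + v t‖ ^ 2 ≤ 2 * ‖u t‖ ^ 2 + 4 * c ^ 2 + 4 * G t ^ 2 := fun t ht => by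
    have hsum : ‖u t + v t‖ ^ 2 ≤ (‖u t‖ + ‖v t‖) ^ 2 := by gcongr; exact norm_add_le _ _
    have hv_sq : ‖v t‖ ^ 2 ≤ (c + G t) ^ 2 := by gcongr; exact hv_le t ht
    linarith [add_sq_le (a := ‖u t‖) (b := ‖v t‖), add_sq_le (a := c) (b := G t)]
  have hu2 : IntervalIntegrable (fun t => ‖u t‖ ^ 2) volume a b :=
    (hu.norm.pow 2).intervalIntegrable
  have hG2 : IntervalIntegrable (fun t => G t ^ 2) volume a b :=
    ((continuousOn_primitive_interval' hg left_mem_uIcc).pow 2).intervalIntegrable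
  calc ∫ t in a..b, ‖u t + v t‖ ^ 2
      ≤ ∫ t in a..b, (2 * ‖u t‖ ^ 2 + 4 * c ^ 2 + 4 * G t ^ 2) :=
        integral_mono_on hab ((hu.add hv).norm.pow 2).intervalIntegrable
          (((hu2.const_mul 2).add intervalIntegrable_const).add (hG2.const_mul 4)) hpointwise
    _ = 2 * (∫ t in a..b, ‖u t‖ ^ 2) + 4 * (b - a) * c ^ 2 + 4 * ∫ t in a..b, G t ^ 2 := by
        rw [integral_add ((hu2.const_mul 2).add intervalIntegrable_const) (hG2.const_mul 4),
          integral_add (hu2.const_mul 2) intervalIntegrable_const]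
        simp only [intervalIntegral.integral_const_mul, intervalIntegral.integral_const,
          smul_eq_mul]
        ring
    _ ≤ _ := by linarith [integral_sq_primitive_le hab hg hg2]

theorem l2_in_time_error_bound_general {H : Type*} [NormedAddCommGroup H]
    [InnerProductSpace ℝ H]
    (T : ℝ) (hT : 0 < T) (Q : H → ℝ) (hQ : ∀ v : H, 0 ≤ Q v)
    (ϑ ϑ' ρ ρ' : ℝ → H)
    (hϑderiv : ∀ t ∈ Set.Icc (0 : ℝ) T, HasDerivAt ϑ (ϑ' t) t)
    (hϑcont : ContinuousOn ϑ' (Set.Icc (0 : ℝ) T))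
    (hρderiv : ∀ t ∈ Set.Icc (0 : ℝ) T, HasDerivAt ρ (ρ' t) t)
    (heq : ∀ t ∈ Set.Icc (0 : ℝ) T, ⟪ρ' t, ρ t⟫ + Q (ρ t) = -⟪ϑ' t, ρ t⟫) :
    ∫ t in (0 : ℝ)..T, ‖ϑ t + ρ t‖ ^ 2 ≤
      2 * (∫ t in (0 : ℝ)..T, ‖ϑ t‖ ^ 2) + 4 * T * ‖ρ 0‖ ^ 2 +
        2 * T ^ 2 * ∫ t in (0 : ℝ)..T, ‖ϑ' t‖ ^ 2 := by
  rw [← uIcc_of_le hT.le] at hϑderiv hϑcont hρderiv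
  have hϑ : ContinuousOn ϑ (uIcc 0 T) := fun t ht => (hϑderiv t ht).continuousAt.continuousWithinAt
  have hρ : ContinuousOn ρ (uIcc 0 T) := fun t ht => (hρderiv t ht).continuousAt.continuousWithinAt
  have hϑ' : ContinuousOn (‖ϑ' ·‖) (uIcc 0 T) := hϑcont.norm
  have hρ_le : ∀ t ∈ Icc 0 T, ‖ρ t‖ ≤ ‖ρ 0‖ + ∫ s in (0 : ℝ)..t, ‖ϑ' s‖ :=
    norm_le_norm_add_integral_of_inner_deriv_le (uIcc_of_le hT.le ▸ hρ)
      (fun t ht => hρderiv t (Icc_subset_uIcc (Ioo_subset_Icc_self ht))) hϑ'.intervalIntegrable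
      (fun _ _ => norm_nonneg _) fun t ht => by
        linarith [heq t (Ioo_subset_Icc_self ht), hQ (ρ t), neg_abs_le ⟪ϑ' t, ρ t⟫,
          abs_real_inner_le_norm (ϑ' t) (ρ t)]
  simpa using integral_norm_add_sq_le_of_norm_le_add_primitive hT.le hϑ hρ
    hϑ'.intervalIntegrable (hϑ'.pow 2).intervalIntegrable hρ_le

/-- Abstract content of Lemma 4.8: if
`⟪ρ'(t), ρ(t)⟫ + Q(ρ(t)) = −⟪ϑ'(t), ρ(t)⟫` with `Q ≥ 0`, then
`∫₀ᵀ ‖ϑ + ρ‖² ≤ 2 ∫₀ᵀ ‖ϑ‖² + 4T ‖ρ(0)‖² + 2T² ∫₀ᵀ ‖ϑ'‖²`. -/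
theorem l2_in_time_error_bound {H : Type*} [NormedAddCommGroup H]
    [InnerProductSpace ℝ H] [CompleteSpace H]
    (T : ℝ) (hT : 0 < T) (Q : H → ℝ) (hQ : ∀ v : H, 0 ≤ Q v)
    (ϑ ϑ' ρ ρ' : ℝ → H)
    (hϑderiv : ∀ t ∈ Set.Icc (0 : ℝ) T, HasDerivAt ϑ (ϑ' t) t)
    (hϑcont : ContinuousOn ϑ' (Set.Icc (0 : ℝ) T))
    (hρderiv : ∀ t ∈ Set.Icc (0 : ℝ) T, HasDerivAt ρ (ρ' t) t)
    (hρcont : ContinuousOn ρ' (Set.Icc (0 : ℝ) T))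
    (heq : ∀ t ∈ Set.Icc (0 : ℝ) T, ⟪ρ' t, ρ t⟫ + Q (ρ t) = -⟪ϑ' t, ρ t⟫) :
    ∫ t in (0 : ℝ)..T, ‖ϑ t + ρ t‖ ^ 2 ≤
      2 * (∫ t in (0 : ℝ)..T, ‖ϑ t‖ ^ 2) + 4 * T * ‖ρ 0‖ ^ 2 +
        2 * T ^ 2 * ∫ t in (0 : ℝ)..T, ‖ϑ' t‖ ^ 2 :=
  l2_in_time_error_bound_general T hT Q hQ ϑ ϑ' ρ ρ' hϑderiv hϑcont hρderiv heq
end
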